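/- Suppose there exists a constant λ > 0 such that every Boolean function g : {-1,1}^m → {-1,1} (for every m) satisfies H(ĝ²) ≤ λ·C¹(g). Then Mansour's conjecture holds with explicit bounds: for every t-term DNF f : {-1,1}^n → {-1,1} and every ε ∈ (0,1), there exists a multilinear polynomial p : {-1,1}^n → ℝ with at most (16t/ε)^{4λ/ε} nonzero Fourier coefficients such that E_x[(f(x) − p(x))²] ≤ ε. -/

import Mathlib

open Finset

/-- The real value (`1` or `-1`) encoded by a Boolean. -/
noncomputable def bsgn (b : Bool) : ℝ := if b then 1 else -1

/-- The character `χ_S(x) = ∏_{i ∈ S} x_i` on the hypercube `{-1,1}^n`. -/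
noncomputable def chi {n : ℕ} (S : Finset (Fin n)) (x : Fin n → Bool) : ℝ :=
  ∏ i ∈ S, bsgn (x i)

/-- The Fourier coefficient `f̂(S) = E_x [f(x)·χ_S(x)]`. -/
noncomputable def fCoeff {n : ℕ} (f : (Fin n → Bool) → ℝ) (S : Finset (Fin n)) : ℝ :=
  (∑ x : Fin n → Bool, f x * chi S x) / 2 ^ n

/-- The Fourier (Shannon) entropy `H(f̂²) = Σ_S f̂(S)² log₂(1/f̂(S)²)`. -/
noncomputable def fEntropy {n : ℕ} (f : (Fin n → Bool) → ℝ) : ℝ :=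
  ∑ S : Finset (Fin n), (fCoeff f S) ^ 2 * Real.logb 2 (1 / (fCoeff f S) ^ 2)

/-- The Fourier min-entropy `H_∞(f̂²) = min_{S : f̂(S) ≠ 0} log₂(1/f̂(S)²)`. -/
noncomputable def fMinEntropy {n : ℕ} (f : (Fin n → Bool) → ℝ) : ℝ :=
  sInf {y : ℝ | ∃ S : Finset (Fin n),
    fCoeff f S ≠ 0 ∧ y = Real.logb 2 (1 / (fCoeff f S) ^ 2)}

/-- The total influence `Inf(f) = Σ_S |S|·f̂(S)²`. -/
noncomputable def totalInf {n : ℕ} (f : (Fin n → Bool) → ℝ) : ℝ :=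
  ∑ S : Finset (Fin n), (S.card : ℝ) * (fCoeff f S) ^ 2

/-- `f` is a Boolean (`±1`-valued) function. -/
def IsBooleanFunc {n : ℕ} (f : (Fin n → Bool) → ℝ) : Prop := ∀ x, f x = 1 ∨ f x = -1

/-- The certificate complexity of `g` at `x`: the minimum size of a set `B` of coordinates
such that every `y` agreeing with `x` on `B` satisfies `g y = g x`. -/
noncomputable def certAt {m : ℕ} (g : (Fin m → Bool) → ℝ) (x : Fin m → Bool) : ℕ :=
  sInf {c : ℕ | ∃ B : Finset (Fin m), B.card = c ∧
    ∀ y : Fin m → Bool, (∀ i ∈ B, y i = x i) → g y = g x}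

/-- The 1-certificate complexity `C¹(g)`: the maximum of `certAt g x` over inputs `x` with
`g x = -1` (and `0` if there is no such input). -/
noncomputable def oneCert {m : ℕ} (g : (Fin m → Bool) → ℝ) : ℕ :=
  (Finset.univ.filter (fun x : Fin m → Bool => g x = -1)).sup (fun x => certAt g x)

/-!
Truncate the DNF to its terms of width at most `w = ⌊log₂ X⌋`, `X = 16t/ε`. Each dropped term is
satisfied by at most a `2^{-(w+1)} < 1/X` fraction of inputs, so `‖f - g‖² ≤ 4t/X = ε/4` for the
truncation `g`, and its 1-certificates are the surviving terms, so `C¹(g) ≤ w` and the hypothesis gives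
`H(ĝ²) ≤ λ log₂ X`. Keeping only the coefficients with `ĝ(S)² ≥ 1/M`, `M = X^{4λ/ε}`, leaves at
most `M` of them by Parseval, and every discarded one contributes at least `log₂ M` times its
weight to the entropy, so the discarded weight is at most `λ log₂ X / log₂ M = ε/4`.
Finally `‖f - p‖² ≤ 2‖f - g‖² + 2‖g - p‖²`.
-/

section Fourier

variable {n : ℕ}

theorem sum_bsgn_mul_bsgn_ite (p q : Prop) [Decidable p] [Decidable q] :
    ∑ b : Bool, (if p then bsgn b else 1) * (if q then bsgn b else 1) =
      if (p ↔ q) then 2 else 0 := by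
  by_cases hp : p <;> by_cases hq : q <;> norm_num [hp, hq, bsgn]

theorem chi_mul_chi_eq_prod (S S' : Finset (Fin n)) (x : Fin n → Bool) :
    chi S x * chi S' x =
      ∏ i, (if i ∈ S then bsgn (x i) else 1) * (if i ∈ S' then bsgn (x i) else 1) := by
  rw [prod_mul_distrib, Fintype.prod_ite_mem, Fintype.prod_ite_mem, chi, chi]

theorem sum_chi_mul_chi (S S' : Finset (Fin n)) :
    ∑ x : Fin n → Bool, chi S x * chi S' x = if S = S' then 2 ^ n else 0 := by
  simp only [chi_mul_chi_eq_prod]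
  rw [← Fintype.prod_sum fun i b =>
      (if i ∈ S then bsgn b else 1) * (if i ∈ S' then bsgn b else 1),
    Fintype.prod_congr _ _ fun i => sum_bsgn_mul_bsgn_ite _ _, Fintype.prod_ite_zero]
  simp [← Finset.ext_iff]

theorem sum_finset_chi_mul_chi (x y : Fin n → Bool) :
    ∑ S : Finset (Fin n), chi S x * chi S y = if x = y then 2 ^ n else 0 := by
  have h : ∀ i, 1 + bsgn (x i) * bsgn (y i) = if x i = y i then 2 else 0 := by
    intro i
    cases x i <;> cases y i <;> norm_num [bsgn]
  simp only [chi, ← prod_mul_distrib]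
  rw [← powerset_univ, ← prod_one_add, Fintype.prod_congr _ _ h, Fintype.prod_ite_zero]
  simp [← funext_iff]

theorem sum_fCoeff_mul_chi (g : (Fin n → Bool) → ℝ) (x : Fin n → Bool) :
    ∑ S, fCoeff g S * chi S x = g x := by
  simp only [fCoeff, div_mul_eq_mul_div, ← sum_div, sum_mul, mul_assoc]
  rw [sum_comm]
  simp only [← mul_sum, sum_finset_chi_mul_chi, mul_ite, mul_zero, sum_ite_eq', mem_univ,
    if_true]
  field_simp

theorem sum_sq_eq_two_pow_mul_sum_fCoeff_sq (g : (Fin n → Bool) → ℝ) :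
    ∑ x, g x ^ 2 = 2 ^ n * ∑ S, fCoeff g S ^ 2 := by
  calc ∑ x, g x ^ 2 = ∑ x, g x * ∑ S, fCoeff g S * chi S x := by
        simp only [sum_fCoeff_mul_chi, sq]
    _ = ∑ S, fCoeff g S * ∑ x, g x * chi S x := by
        simp only [mul_sum]
        rw [sum_comm]
        exact sum_congr rfl fun _ _ => sum_congr rfl fun _ _ => by ring
    _ = 2 ^ n * ∑ S, fCoeff g S ^ 2 := by
        rw [mul_sum]
        refine sum_congr rfl fun S _ => ?_
        rw [fCoeff]
        field_simp

theorem fCoeff_sum_mul_chi (T : Finset (Finset (Fin n))) (c : Finset (Fin n) → ℝ)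
    (S : Finset (Fin n)) :
    fCoeff (fun x => ∑ A ∈ T, c A * chi A x) S = if S ∈ T then c S else 0 := by
  simp only [fCoeff, sum_mul, mul_assoc]
  rw [sum_comm]
  simp only [← mul_sum, sum_chi_mul_chi, mul_ite, mul_zero, sum_ite_eq']
  split_ifs <;> simp

theorem sum_sq_sum_mul_chi (T : Finset (Finset (Fin n))) (c : Finset (Fin n) → ℝ) :
    ∑ x, (∑ A ∈ T, c A * chi A x) ^ 2 = 2 ^ n * ∑ A ∈ T, c A ^ 2 := by
  simp only [sum_sq_eq_two_pow_mul_sum_fCoeff_sq, fCoeff_sum_mul_chi, ite_pow]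
  simp

theorem IsBooleanFunc.sum_fCoeff_sq_eq_one {g : (Fin n → Bool) → ℝ} (hg : IsBooleanFunc g) :
    ∑ S, fCoeff g S ^ 2 = 1 := by
  have hsq : ∀ x, g x ^ 2 = 1 := fun x => by rcases hg x with h | h <;> simp [h]
  have h := sum_sq_eq_two_pow_mul_sum_fCoeff_sq g
  simp only [hsq, sum_const, card_univ, Fintype.card_fun, Fintype.card_fin,
    Fintype.card_bool, nsmul_eq_mul, mul_one, Nat.cast_pow, Nat.cast_ofNat] at h
  exact (mul_eq_left₀ (by positivity)).mp h.symm

theorem IsBooleanFunc.fCoeff_sq_le_one {g : (Fin n → Bool) → ℝ} (hg : IsBooleanFunc g)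
    (S : Finset (Fin n)) : fCoeff g S ^ 2 ≤ 1 :=
  hg.sum_fCoeff_sq_eq_one ▸ single_le_sum (fun A _ => sq_nonneg (fCoeff g A)) (mem_univ S)

end Fourier

section SparseApproximation

theorem mul_logb_one_div_nonneg {a : ℝ} (ha₀ : 0 ≤ a) (ha₁ : a ≤ 1) :
    0 ≤ a * Real.logb 2 (1 / a) := by
  rcases ha₀.eq_or_lt with rfl | ha
  · simp
  · exact mul_nonneg ha₀ (Real.logb_nonneg one_lt_two (by rwa [le_div_iff₀ ha, one_mul]))

theorem logb_mul_le_mul_logb_one_div {a M : ℝ} (hM : 0 < M) (ha₀ : 0 ≤ a)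
    (ha : a ≤ M⁻¹) : Real.logb 2 M * a ≤ a * Real.logb 2 (1 / a) := by
  rcases ha₀.eq_or_lt with rfl | ha₀
  · simp
  · rw [mul_comm]
    refine mul_le_mul_of_nonneg_left (Real.logb_le_logb_of_le one_lt_two hM ?_) ha₀.le
    rwa [one_div, le_inv_comm₀ hM ha₀]

variable {n : ℕ}

noncomputable def meanSqDist (f g : (Fin n → Bool) → ℝ) : ℝ :=
  (∑ x, (f x - g x) ^ 2) / 2 ^ n

theorem meanSqDist_le_two_mul_add (f g h : (Fin n → Bool) → ℝ) :
    meanSqDist f h ≤ 2 * meanSqDist f g + 2 * meanSqDist g h := by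
  simp only [meanSqDist, ← mul_div_assoc, ← add_div, mul_sum, ← sum_add_distrib]
  gcongr with x
  nlinarith [sq_nonneg (f x - 2 * g x + h x)]

theorem meanSqDist_sum_fCoeff_mul_chi (g : (Fin n → Bool) → ℝ) (T : Finset (Finset (Fin n))) :
    meanSqDist g (fun x => ∑ S ∈ T, fCoeff g S * chi S x) = ∑ S ∈ Tᶜ, fCoeff g S ^ 2 := by
  have hdiff : ∀ x,
      g x - ∑ S ∈ T, fCoeff g S * chi S x = ∑ S ∈ Tᶜ, fCoeff g S * chi S x := fun x => by
    rw [← sum_fCoeff_mul_chi g x, ← sum_add_sum_compl T, add_sub_cancel_left]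
  simp only [meanSqDist, hdiff, sum_sq_sum_mul_chi]
  field_simp

theorem IsBooleanFunc.exists_sparse_approx {g : (Fin n → Bool) → ℝ} (hg : IsBooleanFunc g)
    {M : ℝ} (hM : 0 < M) :
    ∃ p : (Fin n → Bool) → ℝ,
      ((univ.filter fun S => fCoeff p S ≠ 0).card : ℝ) ≤ M ∧
      Real.logb 2 M * meanSqDist g p ≤ fEntropy g := by
  set T := univ.filter fun S => M⁻¹ ≤ fCoeff g S ^ 2
  refine ⟨fun x => ∑ S ∈ T, fCoeff g S * chi S x, ?_, ?_⟩
  · have hsupp : (univ.filter fun S =>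
        fCoeff (fun x => ∑ S ∈ T, fCoeff g S * chi S x) S ≠ 0) ⊆ T := by
      intro S
      simp only [mem_filter, fCoeff_sum_mul_chi]
      aesop
    have hT : (T.card : ℝ) * M⁻¹ ≤ 1 :=
      calc (T.card : ℝ) * M⁻¹ ≤ ∑ S ∈ T, fCoeff g S ^ 2 := by
            simpa using card_nsmul_le_sum T _ _ fun S hS => (mem_filter.mp hS).2
        _ ≤ ∑ S, fCoeff g S ^ 2 := sum_le_univ_sum_of_nonneg fun S => sq_nonneg _
        _ = 1 := hg.sum_fCoeff_sq_eq_one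
    rw [mul_inv_le_iff₀ hM, one_mul] at hT
    exact le_trans (by exact_mod_cast card_le_card hsupp) hT
  · rw [meanSqDist_sum_fCoeff_mul_chi, mul_sum]
    calc ∑ S ∈ Tᶜ, Real.logb 2 M * fCoeff g S ^ 2
        ≤ ∑ S ∈ Tᶜ, fCoeff g S ^ 2 * Real.logb 2 (1 / fCoeff g S ^ 2) := by
          refine sum_le_sum fun S hS => logb_mul_le_mul_logb_one_div hM (sq_nonneg _) ?_
          exact (by simpa [T] using hS : fCoeff g S ^ 2 < M⁻¹).le
      _ ≤ fEntropy g := sum_le_univ_sum_of_nonneg fun S =>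
          mul_logb_one_div_nonneg (sq_nonneg _) (hg.fCoeff_sq_le_one S)

end SparseApproximation

section DNF

variable {n : ℕ} {ι : Type*} (dom : ι → Finset (Fin n)) (val : ι → Fin n → Bool)

open Classical in
noncomputable def dnfEval (J : Finset ι) (x : Fin n → Bool) : ℝ :=
  if ∃ j ∈ J, ∀ i ∈ dom j, x i = val j i then -1 else 1

theorem isBooleanFunc_dnfEval (J : Finset ι) : IsBooleanFunc (dnfEval dom val J) := by
  intro x
  unfold dnfEval
  split_ifs <;> simp

theorem dnfEval_eq_neg_one_iff (J : Finset ι) (x : Fin n → Bool) :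
    dnfEval dom val J x = -1 ↔ ∃ j ∈ J, ∀ i ∈ dom j, x i = val j i := by
  unfold dnfEval
  split_ifs with h <;> norm_num [h]

theorem IsBooleanFunc.eq_dnfEval_univ [Fintype ι] {f : (Fin n → Bool) → ℝ}
    (hf : IsBooleanFunc f) (hDNF : ∀ x, (f x = -1 ↔ ∃ j, ∀ i ∈ dom j, x i = val j i)) :
    f = dnfEval dom val univ := by
  funext x
  have h := (hDNF x).trans (by simpa using (dnfEval_eq_neg_one_iff dom val univ x).symm)
  rcases hf x with hx | hx <;> rcases isBooleanFunc_dnfEval dom val univ x with hy | hy <;>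
    rw [hx, hy] <;> norm_num [hx, hy] at h

theorem oneCert_dnfEval_le {J : Finset ι} {w : ℕ} (hJ : ∀ j ∈ J, (dom j).card ≤ w) :
    oneCert (dnfEval dom val J) ≤ w := by
  refine Finset.sup_le fun x hx => ?_
  obtain ⟨j, hj, hxj⟩ := (dnfEval_eq_neg_one_iff dom val J x).mp (mem_filter.mp hx).2
  refine le_trans (Nat.sInf_le ⟨dom j, rfl, fun y hy => ?_⟩) (hJ j hj)
  rw [(mem_filter.mp hx).2, dnfEval_eq_neg_one_iff]
  exact ⟨j, hj, fun i hi => (hy i hi).trans (hxj i hi)⟩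

theorem card_filter_agree (B : Finset (Fin n)) (v : Fin n → Bool) :
    (univ.filter fun x : Fin n → Bool => ∀ i ∈ B, x i = v i).card = 2 ^ Bᶜ.card := by
  have h : (univ.filter fun x : Fin n → Bool => ∀ i ∈ B, x i = v i) =
      Fintype.piFinset fun i => if i ∈ B then {v i} else univ := by
    ext x
    simp only [mem_filter, mem_univ, true_and, Fintype.mem_piFinset]
    refine forall_congr' fun i => ?_
    split_ifs with hi <;> simp [hi]
  rw [h, Fintype.card_piFinset]
  simp [apply_ite Finset.card, prod_ite, filter_not, compl_eq_univ_sdiff]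

variable [Fintype ι]

open Classical in
theorem sq_dnfEval_sub_le (J : Finset ι) (x : Fin n → Bool) :
    (dnfEval dom val univ x - dnfEval dom val J x) ^ 2 ≤
      4 * ∑ j ∈ Jᶜ, if ∀ i ∈ dom j, x i = val j i then (1 : ℝ) else 0 := by
  have hsum : 0 ≤ ∑ j ∈ Jᶜ, if ∀ i ∈ dom j, x i = val j i then (1 : ℝ) else 0 :=
    sum_nonneg fun _ _ => by positivity
  unfold dnfEval
  by_cases hJ : ∃ j ∈ J, ∀ i ∈ dom j, x i = val j i
  · obtain ⟨j, hjJ, hj⟩ := hJ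
    rw [if_pos ⟨j, mem_univ j, hj⟩, if_pos ⟨j, hjJ, hj⟩]
    linarith
  by_cases hU : ∃ j ∈ univ, ∀ i ∈ dom j, x i = val j i
  · obtain ⟨j, -, hj⟩ := hU
    have hjJ : j ∈ Jᶜ := mem_compl.mpr fun h => hJ ⟨j, h, hj⟩
    have hj_le := single_le_sum
      (f := fun j => if ∀ i ∈ dom j, x i = val j i then (1 : ℝ) else 0)
      (fun _ _ => by positivity) hjJ
    rw [if_pos hj] at hj_le
    rw [if_pos ⟨j, mem_univ j, hj⟩, if_neg hJ]
    linarith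
  · rw [if_neg hU, if_neg hJ]
    linarith

open Classical in
theorem meanSqDist_dnfEval_le (J : Finset ι) :
    meanSqDist (dnfEval dom val univ) (dnfEval dom val J) ≤
      4 * ∑ j ∈ Jᶜ, ((2 : ℝ) ^ (dom j).card)⁻¹ := by
  have hcount : ∀ j,
      (∑ x : Fin n → Bool, if ∀ i ∈ dom j, x i = val j i then (1 : ℝ) else 0) =
        2 ^ n * ((2 : ℝ) ^ (dom j).card)⁻¹ := by
    intro j
    rw [sum_boole, card_filter_agree, eq_mul_inv_iff_mul_eq₀ (by positivity)]
    push_cast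
    rw [← pow_add, add_comm, card_add_card_compl, Fintype.card_fin]
  rw [meanSqDist, div_le_iff₀ (by positivity)]
  calc ∑ x, (dnfEval dom val univ x - dnfEval dom val J x) ^ 2
      ≤ ∑ x, 4 * ∑ j ∈ Jᶜ, if ∀ i ∈ dom j, x i = val j i then (1 : ℝ) else 0 :=
        sum_le_sum fun x _ => sq_dnfEval_sub_le dom val J x
    _ = (4 * ∑ j ∈ Jᶜ, ((2 : ℝ) ^ (dom j).card)⁻¹) * 2 ^ n := by
        rw [← mul_sum, sum_comm, mul_assoc, sum_mul]
        simp only [hcount, mul_comm]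

open Classical in
theorem meanSqDist_dnfEval_filter_card_le (w : ℕ) :
    meanSqDist (dnfEval dom val univ) (dnfEval dom val (univ.filter fun j => (dom j).card ≤ w)) ≤
      4 * Fintype.card ι / 2 ^ (w + 1) := by
  set J := univ.filter fun j => (dom j).card ≤ w
  refine (meanSqDist_dnfEval_le dom val J).trans ?_
  calc 4 * ∑ j ∈ Jᶜ, ((2 : ℝ) ^ (dom j).card)⁻¹
      ≤ 4 * ∑ _j ∈ Jᶜ, ((2 : ℝ) ^ (w + 1))⁻¹ := by
        gcongr with j hj
        · norm_num
        · simpa [J] using hj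
    _ ≤ 4 * ∑ _j : ι, ((2 : ℝ) ^ (w + 1))⁻¹ := by
        gcongr
        exact subset_univ _
    _ = 4 * Fintype.card ι / 2 ^ (w + 1) := by simp [div_eq_mul_inv, mul_assoc]

end DNF

theorem lt_two_pow_floor_logb_add_one {x : ℝ} (hx : 0 < x) :
    x < 2 ^ (⌊Real.logb 2 x⌋₊ + 1) := by
  have h := Nat.lt_floor_add_one (Real.logb 2 x)
  rw [Real.logb_lt_iff_lt_rpow one_lt_two hx] at h
  exact_mod_cast h

/-- Suppose there is a constant `λ > 0` such that every Boolean function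
`g` (on any number of variables) satisfies `H(ĝ²) ≤ λ·C¹(g)`.  Then Mansour's conjecture
holds with explicit bounds: for every `t`-term DNF `f` (terms given by partial assignments
`(dom j, val j)`, value `-1` meaning TRUE) and every `ε ∈ (0,1)`, there is a multilinear
polynomial `p` with at most `(16t/ε)^{4λ/ε}` nonzero Fourier coefficients such that
`E_x[(f(x) - p(x))²] ≤ ε`. -/
theorem stmt11 (lam : ℝ) (hlam : 0 < lam)
    (hFEIcert : ∀ (m : ℕ) (g : (Fin m → Bool) → ℝ), IsBooleanFunc g →
      fEntropy g ≤ lam * (oneCert g : ℝ))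
    {n t : ℕ} (ht : 1 ≤ t)
    (f : (Fin n → Bool) → ℝ) (hf : IsBooleanFunc f)
    (dom : Fin t → Finset (Fin n)) (val : Fin t → Fin n → Bool)
    (hDNF : ∀ x, (f x = -1 ↔ ∃ j, ∀ i ∈ dom j, x i = val j i))
    (ε : ℝ) (hε0 : 0 < ε) (hε1 : ε < 1) :
    ∃ p : (Fin n → Bool) → ℝ,
      ((Finset.univ.filter (fun S : Finset (Fin n) => fCoeff p S ≠ 0)).card : ℝ)
          ≤ (16 * t / ε) ^ (4 * lam / ε) ∧
      (∑ x : Fin n → Bool, (f x - p x) ^ 2) / 2 ^ n ≤ ε := by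
  set X : ℝ := 16 * t / ε with hX
  have hX1 : 1 < X := by
    rw [hX, lt_div_iff₀ hε0]
    linarith [show (1 : ℝ) ≤ t by exact_mod_cast ht]
  have hlogX : 0 < Real.logb 2 X := Real.logb_pos one_lt_two hX1
  set w := ⌊Real.logb 2 X⌋₊
  set g := dnfEval dom val (univ.filter fun j => (dom j).card ≤ w)
  have hfg : meanSqDist f g ≤ ε / 4 := by
    rw [hf.eq_dnfEval_univ dom val hDNF]
    calc _ ≤ (4 * t / 2 ^ (w + 1) : ℝ) := by
          simpa using meanSqDist_dnfEval_filter_card_le dom val w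
      _ ≤ 4 * t / X := by gcongr; exact (lt_two_pow_floor_logb_add_one (by positivity)).le
      _ = ε / 4 := by rw [hX]; field_simp; ring
  have hg_ent : fEntropy g ≤ lam * Real.logb 2 X := by
    have hcert : (oneCert g : ℝ) ≤ w := Nat.cast_le.mpr <|
      oneCert_dnfEval_le dom val fun j hj => (mem_filter.mp hj).2
    have hw : (w : ℝ) ≤ Real.logb 2 X := Nat.floor_le hlogX.le
    exact (hFEIcert n g (isBooleanFunc_dnfEval dom val _)).trans (by gcongr; linarith)
  obtain ⟨p, hp_card, hp_err⟩ :=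
    (isBooleanFunc_dnfEval dom val _).exists_sparse_approx (M := X ^ (4 * lam / ε)) (by positivity)
  rw [Real.logb_rpow_eq_mul_logb_of_pos (by positivity)] at hp_err
  have hgp : meanSqDist g p ≤ ε / 4 := by
    refine le_of_mul_le_mul_left ?_ (by positivity : 0 < 4 * lam / ε * Real.logb 2 X)
    calc _ ≤ lam * Real.logb 2 X := hp_err.trans hg_ent
      _ = _ := by field_simp
  exact ⟨p, hp_card, (meanSqDist_le_two_mul_add f g p).trans (by linarith)⟩
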